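/- Let m ≥ 2 and 1 ≤ k ≤ m. Let S be a uniformly random k-element subset of {1,…,m} and let P_S denote the m×m diagonal 0/1 matrix with (P_S)_{ii} = 1 if and only if i ∈ S. Then for every real m×m matrix A, E_S[P_S A P_S] = (k/m)·( ((k−1)/(m−1))·A + ((m−k)/(m−1))·diag(A) ), where diag(A) is the diagonal matrix whose diagonal agrees with that of A and whose off-diagonal entries are zero. -/

import Mathlib

open Matrix Finset

/-!
Entry `(i, j)` of `P_S A P_S` is `[i ∈ S] [j ∈ S] A i j`, so averaging over `S` multiplies
`A i j` by the probability that `{i, j} ⊆ S`. A uniform `k`-subset of an `n`-set contains a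
fixed `r`-set with probability
`C(n-r, k-r) / C(n, k) = k (k-1) ⋯ (k-r+1) / (n (n-1) ⋯ (n-r+1))`,
which is `k / m` on the diagonal (`r = 1`) and `k (k-1) / (m (m-1))` off it (`r = 2`).
-/

theorem card_filter_powersetCard_subset_mul_descFactorial {α : Type*} [DecidableEq α]
    {u t : Finset α} (hut : u ⊆ t) (k : ℕ) :
    #{S ∈ t.powersetCard k | u ⊆ S} * (#t).descFactorial #u =
      k.descFactorial #u * (#t).choose k := by
  by_cases huk : #u ≤ k
  · rw [card_filter_powersetCard_subset u t k hut huk, Nat.descFactorial_eq_factorial_mul_choose,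
      Nat.descFactorial_eq_factorial_mul_choose, mul_assoc, mul_comm (k.choose _),
      Nat.choose_mul huk]
    ring
  · rw [Nat.descFactorial_eq_zero_iff_lt.2 (not_le.1 huk), zero_mul, mul_eq_zero, card_eq_zero,
      filter_eq_empty_iff]
    exact .inl fun S hS huS => huk ((card_le_card huS).trans (mem_powersetCard.1 hS).2.le)

theorem card_filter_powersetCard_subset_div_choose {α K : Type*} [DecidableEq α] [Field K]
    [CharZero K] {u t : Finset α} (hut : u ⊆ t) {k : ℕ} (hkt : k ≤ #t) :
    (#{S ∈ t.powersetCard k | u ⊆ S} : K) / (#t).choose k =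
      k.descFactorial #u / (#t).descFactorial #u := by
  have hchoose : ((#t).choose k : K) ≠ 0 := by exact_mod_cast (Nat.choose_pos hkt).ne'
  have hdesc : ((#t).descFactorial #u : K) ≠ 0 := by
    exact_mod_cast (Nat.descFactorial_pos.2 (card_le_card hut)).ne'
  rw [div_eq_div_iff hchoose hdesc]
  exact_mod_cast card_filter_powersetCard_subset_mul_descFactorial hut k

theorem sum_diagonal_indicator_mul_mul_diagonal_indicator_apply {ι R : Type*} [Fintype ι]
    [DecidableEq ι] [Semiring R] (s : Finset (Finset ι)) (A : Matrix ι ι R) (i j : ι) :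
    (∑ S ∈ s, diagonal (fun l => if l ∈ S then (1 : R) else 0) * A *
      diagonal (fun l => if l ∈ S then (1 : R) else 0)) i j =
      #{S ∈ s | {i, j} ⊆ S} • A i j := by
  simp only [Matrix.sum_apply, diagonal_mul, mul_diagonal, ite_mul, one_mul, zero_mul, mul_ite,
    mul_one, mul_zero, insert_subset_iff, singleton_subset_iff]
  rw [← sum_filter, ← sum_filter, filter_filter, sum_const]
  simp only [and_comm]

theorem rand_k_projection_expectation (m k : ℕ) (hm : 2 ≤ m) (hkm : k ≤ m)
    (A : Matrix (Fin m) (Fin m) ℝ) :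
    ((m.choose k : ℝ))⁻¹ •
        ∑ S ∈ Finset.powersetCard k (Finset.univ : Finset (Fin m)),
          (Matrix.diagonal (fun i => if i ∈ S then (1 : ℝ) else 0)) * A *
            (Matrix.diagonal (fun i => if i ∈ S then (1 : ℝ) else 0)) =
      ((k : ℝ) / m) •
        ((((k : ℝ) - 1) / ((m : ℝ) - 1)) • A +
          (((m : ℝ) - (k : ℝ)) / ((m : ℝ) - 1)) • Matrix.diagonal (fun i => A i i)) := by
  have hm1 : (m : ℝ) - 1 ≠ 0 := by
    have : (2 : ℝ) ≤ m := by exact_mod_cast hm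
    linarith
  ext i j
  have hprob := card_filter_powersetCard_subset_div_choose (K := ℝ) (subset_univ {i, j})
    (by simpa using hkm)
  rw [card_univ, Fintype.card_fin] at hprob
  rw [Matrix.smul_apply, sum_diagonal_indicator_mul_mul_diagonal_indicator_apply, nsmul_eq_mul,
    smul_eq_mul, ← mul_assoc, inv_mul_eq_div, hprob]
  rcases eq_or_ne i j with rfl | hij
  · rw [pair_eq_singleton, card_singleton, Nat.descFactorial_one, Nat.descFactorial_one]
    simp only [Matrix.smul_apply, Matrix.add_apply, diagonal_apply_eq, smul_eq_mul]
    field_simp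
    ring
  · rw [card_pair hij, Nat.cast_descFactorial_two, Nat.cast_descFactorial_two]
    simp only [Matrix.smul_apply, Matrix.add_apply, diagonal_apply_ne _ hij, smul_eq_mul]
    field_simp
    ring
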